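/- In the standing setup, if a vector a ∈ V has the property that either Y(a⊗x) = 0 for all x ∈ V, or Y(x⊗a) = 0 for all x ∈ V, then a = 0. -/

import Mathlib

open TensorProduct LinearMap

noncomputable section

variable (k V : Type) [Field k] [AddCommGroup V] [Module k V]

/-- `R ⊗ Id` acting on `V ⊗ (V ⊗ V)`. -/
def op12 (R : V ⊗[k] V →ₗ[k] V ⊗[k] V) :
    V ⊗[k] (V ⊗[k] V) →ₗ[k] V ⊗[k] (V ⊗[k] V) :=
  (TensorProduct.assoc k V V V).toLinearMap ∘ₗ LinearMap.rTensor V R ∘ₗ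
    (TensorProduct.assoc k V V V).symm.toLinearMap

/-- `Id ⊗ R` acting on `V ⊗ (V ⊗ V)`. -/
def op23 (R : V ⊗[k] V →ₗ[k] V ⊗[k] V) :
    V ⊗[k] (V ⊗[k] V) →ₗ[k] V ⊗[k] (V ⊗[k] V) :=
  LinearMap.lTensor V R

/-- A Hecke symmetry with parameter `q`: an operator on `V ⊗ V` satisfying the braid
equation and the Hecke relation `(R - q·Id)(R + Id) = 0`, with `q ≠ 0`. -/
def IsHeckeSymmetry (q : k) (R : V ⊗[k] V →ₗ[k] V ⊗[k] V) : Prop :=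
  q ≠ 0 ∧
    op12 k V R ∘ₗ op23 k V R ∘ₗ op12 k V R = op23 k V R ∘ₗ op12 k V R ∘ₗ op23 k V R ∧
    (R - q • LinearMap.id) ∘ₗ (R + LinearMap.id) = 0

/-- `x ⋏ y = ζ(x) ⊗ y - ζ(y) ⊗ x`. -/
def wedge2 (ζ : V ≃ₗ[k] V) (x y : V) : V ⊗[k] V := ζ x ⊗ₜ[k] y - ζ y ⊗ₜ[k] x

/-- `Υ²`, the span of the tensors `x ⋏ y`. -/
def Ups2 (ζ : V ≃ₗ[k] V) : Submodule k (V ⊗[k] V) :=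
  Submodule.span k {w : V ⊗[k] V | ∃ x y : V, w = wedge2 k V ζ x y}

/-- `x ⋏ y ⋏ z`. -/
def wedge3 (ζ : V ≃ₗ[k] V) (x y z : V) : V ⊗[k] (V ⊗[k] V) :=
  ζ (ζ x) ⊗ₜ[k] (ζ y ⊗ₜ[k] z) + ζ (ζ y) ⊗ₜ[k] (ζ z ⊗ₜ[k] x) + ζ (ζ z) ⊗ₜ[k] (ζ x ⊗ₜ[k] y)
    - ζ (ζ x) ⊗ₜ[k] (ζ z ⊗ₜ[k] y) - ζ (ζ y) ⊗ₜ[k] (ζ x ⊗ₜ[k] z) - ζ (ζ z) ⊗ₜ[k] (ζ y ⊗ₜ[k] x)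

/-- `Υ³`, the span of the tensors `x ⋏ y ⋏ z` (which coincides with
`(V ⊗ Υ²) ∩ (Υ² ⊗ V)`). -/
def Ups3 (ζ : V ≃ₗ[k] V) : Submodule k (V ⊗[k] (V ⊗[k] V)) :=
  Submodule.span k {t : V ⊗[k] (V ⊗[k] V) | ∃ x y z : V, t = wedge3 k V ζ x y z}

/-- The bilinear extension `w ↦ x ⋏ w` of the wedge multiplication `V × Υ² → Υ³`:
on elements of `Υ²` it satisfies `x ⋏ (y ⋏ z) = x ⋏ y ⋏ z`. -/
def wedge31 (ζ : V ≃ₗ[k] V) (x : V) : V ⊗[k] V →ₗ[k] V ⊗[k] (V ⊗[k] V) :=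
  TensorProduct.mk k V (V ⊗[k] V) (ζ (ζ x)) +
    (TensorProduct.assoc k V V V).toLinearMap ∘ₗ
      ((TensorProduct.mk k (V ⊗[k] V) V).flip x ∘ₗ
        TensorProduct.map ζ.toLinearMap ζ.toLinearMap) -
    TensorProduct.map ζ.toLinearMap (TensorProduct.mk k V V (ζ x))

/-- The skewsymmetrizer `Y = q·Id - R`. -/
def skewY (q : k) (R : V ⊗[k] V →ₗ[k] V ⊗[k] V) : V ⊗[k] V →ₗ[k] V ⊗[k] V :=
  q • LinearMap.id - R

/-- `R' = (ζ⁻¹ ⊗ ζ⁻¹) ∘ R ∘ (ζ ⊗ ζ)`. -/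
def Rprime (ζ : V ≃ₗ[k] V) (R : V ⊗[k] V →ₗ[k] V ⊗[k] V) :
    V ⊗[k] V →ₗ[k] V ⊗[k] V :=
  TensorProduct.map ζ.symm.toLinearMap ζ.symm.toLinearMap ∘ₗ R ∘ₗ
    TensorProduct.map ζ.toLinearMap ζ.toLinearMap

/-- `ℓ_{xy}(z) = ω̃(x ⋏ Y(ζ(y) ⊗ z))`, where `Ω` is a linear extension of `ω̃` to
`V ⊗ V ⊗ V`. -/
def ell (ζ : V ≃ₗ[k] V) (Y : V ⊗[k] V →ₗ[k] V ⊗[k] V)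
    (Ω : V ⊗[k] (V ⊗[k] V) →ₗ[k] k) (x y : V) : Module.Dual k V :=
  Ω ∘ₗ wedge31 k V ζ x ∘ₗ Y ∘ₗ TensorProduct.mk k V V (ζ y)

/-- The linear forms `ℓ_{xy}` associated with the Hecke symmetry `R`. -/
def ellF (ζ : V ≃ₗ[k] V) (q : k) (R : V ⊗[k] V →ₗ[k] V ⊗[k] V)
    (Ω : V ⊗[k] (V ⊗[k] V) →ₗ[k] k) (x y : V) : Module.Dual k V :=
  ell k V ζ (skewY k V q R) Ω x y

/-- The linear forms `ℓ'_{xy}` associated with the twisted Hecke symmetry `R'`. -/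
def ellF' (ζ : V ≃ₗ[k] V) (q : k) (R : V ⊗[k] V →ₗ[k] V ⊗[k] V)
    (Ω : V ⊗[k] (V ⊗[k] V) →ₗ[k] k) (x y : V) : Module.Dual k V :=
  ell k V ζ (skewY k V q (Rprime k V ζ R)) Ω x y

section AuxLemmas

variable {k V : Type} [Field k] [AddCommGroup V] [Module k V]

lemma aux_left_cancel {a : V} {u : V ⊗[k] V} (hu : u ≠ 0) (h : a ⊗ₜ[k] u = 0) : a = 0 := by
  obtain ⟨g, hg⟩ : ∃ g : Module.Dual k (V ⊗[k] V), g u ≠ 0 := by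
    by_contra hcon
    push_neg at hcon
    exact hu ((Module.forall_dual_apply_eq_zero_iff k u).mp fun φ => hcon φ)
  have h2 := congrArg (TensorProduct.lift ((LinearMap.lsmul k V ∘ₗ g).flip)) h
  simp only [map_zero, TensorProduct.lift.tmul, LinearMap.flip_apply, LinearMap.comp_apply,
    LinearMap.lsmul_apply] at h2
  rcases smul_eq_zero.mp h2 with h3 | h3
  · exact absurd h3 hg
  · exact h3

lemma aux_right_cancel {a : V} {u : V ⊗[k] V} (hu : u ≠ 0) (h : u ⊗ₜ[k] a = 0) : a = 0 := by
  obtain ⟨g, hg⟩ : ∃ g : Module.Dual k (V ⊗[k] V), g u ≠ 0 := by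
    by_contra hcon
    push_neg at hcon
    exact hu ((Module.forall_dual_apply_eq_zero_iff k u).mp fun φ => hcon φ)
  have h2 := congrArg (TensorProduct.lift (LinearMap.lsmul k V ∘ₗ g)) h
  simp only [map_zero, TensorProduct.lift.tmul, LinearMap.comp_apply,
    LinearMap.lsmul_apply] at h2
  rcases smul_eq_zero.mp h2 with h3 | h3
  · exact absurd h3 hg
  · exact h3

lemma aux_identity {M : Type} [AddCommGroup M] [Module k M] (q : k) (A B : Module.End k M)
    (hAA : A * A = (q - 1) • A + q • (1 : Module.End k M))
    (hBB : B * B = (q - 1) • B + q • (1 : Module.End k M))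
    (hb : A * (B * A) = B * (A * B)) :
    (q • (1 : Module.End k M) - A) * ((q • 1 - B) * (q • 1 - A)) - q • (q • 1 - A)
      = (q • 1 - B) * ((q • 1 - A) * (q • 1 - B)) - q • (q • 1 - B) := by
  simp only [mul_sub, sub_mul, smul_mul_assoc, mul_smul_comm, one_mul, mul_one,
    smul_sub, smul_smul]
  rw [hAA, hBB, hb]
  module

end AuxLemmas

theorem stmt4 (hdim : Module.finrank k V = 3) (ζ : V ≃ₗ[k] V) (q : k)
    (R : V ⊗[k] V →ₗ[k] V ⊗[k] V) (hR : IsHeckeSymmetry k V q R)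
    (hY : LinearMap.range (skewY k V q R) = Ups2 k V ζ) :
    ∀ a : V,
      ((∀ x : V, skewY k V q R (a ⊗ₜ[k] x) = 0) ∨
        (∀ x : V, skewY k V q R (x ⊗ₜ[k] a) = 0)) → a = 0 := by
  classical
  obtain ⟨hq, hbraid, hhecke⟩ := hR
  have hYapp : ∀ w : V ⊗[k] V, skewY k V q R w = q • w - R w := by
    intro w
    simp [skewY, LinearMap.sub_apply, LinearMap.smul_apply, LinearMap.id_apply]
  have hAapp : ∀ (u : (V ⊗[k] V) ⊗[k] V),
      op12 k V R ((TensorProduct.assoc k V V V) u)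
        = (TensorProduct.assoc k V V V) (LinearMap.rTensor V R u) := by
    intro u
    simp [op12, LinearMap.comp_apply, LinearEquiv.coe_coe, LinearEquiv.symm_apply_apply]
  have hBapp : ∀ (x : V) (s : V ⊗[k] V), op23 k V R (x ⊗ₜ[k] s) = x ⊗ₜ[k] R s := by
    intro x s
    simp [op23, LinearMap.lTensor_tmul]
  -- Hecke relation in multiplicative form
  have hRR : R * R = (q - 1) • R + q • (1 : Module.End k (V ⊗[k] V)) := by
    have h : (R - q • (1 : Module.End k (V ⊗[k] V))) * (R + 1) = 0 := hhecke
    simp only [sub_mul, mul_add, mul_one, smul_mul_assoc, one_mul] at h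
    linear_combination (norm := module) h
  -- multiplicative relations for op12 R and op23 R
  have hAA : op12 k V R * op12 k V R
      = (q - 1) • op12 k V R + q • (1 : Module.End k (V ⊗[k] (V ⊗[k] V))) := by
    apply LinearMap.ext
    intro t
    have key : ∀ u : (V ⊗[k] V) ⊗[k] V,
        (op12 k V R * op12 k V R) ((TensorProduct.assoc k V V V) u)
          = ((q - 1) • op12 k V R + q • (1 : Module.End k (V ⊗[k] (V ⊗[k] V))))
              ((TensorProduct.assoc k V V V) u) := by
      intro u
      induction u using TensorProduct.induction_on with
      | zero => simp
      | tmul w z =>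
        have h1 : (R * R) w = ((q - 1) • R + q • (1 : Module.End k (V ⊗[k] V))) w := by
          rw [hRR]
        simp only [Module.End.mul_apply, LinearMap.add_apply, LinearMap.smul_apply,
          Module.End.one_apply] at h1
        simp only [Module.End.mul_apply, hAapp, LinearMap.rTensor_tmul, LinearMap.add_apply,
          LinearMap.smul_apply, Module.End.one_apply]
        rw [h1, TensorProduct.add_tmul]
        simp [← TensorProduct.smul_tmul']
      | add u v hu hv => simp only [map_add, hu, hv]
    have h2 := key ((TensorProduct.assoc k V V V).symm t)
    simpa using h2
  have hBB : op23 k V R * op23 k V R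
      = (q - 1) • op23 k V R + q • (1 : Module.End k (V ⊗[k] (V ⊗[k] V))) := by
    apply LinearMap.ext
    intro t
    induction t using TensorProduct.induction_on with
    | zero => simp
    | tmul x s =>
      have h1 : (R * R) s = ((q - 1) • R + q • (1 : Module.End k (V ⊗[k] V))) s := by
        rw [hRR]
      simp only [Module.End.mul_apply, LinearMap.add_apply, LinearMap.smul_apply,
        Module.End.one_apply] at h1
      simp only [Module.End.mul_apply, hBapp, LinearMap.add_apply, LinearMap.smul_apply,
        Module.End.one_apply]
      rw [h1]
      rw [TensorProduct.tmul_add, TensorProduct.tmul_smul, TensorProduct.tmul_smul]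
    | add u v hu hv => simp only [map_add, hu, hv]
  have hb' : op12 k V R * (op23 k V R * op12 k V R)
      = op23 k V R * (op12 k V R * op23 k V R) := by
    simpa [Module.End.mul_eq_comp] using hbraid
  -- Y1 and Y2
  set Y1 : Module.End k (V ⊗[k] (V ⊗[k] V)) :=
    q • (1 : Module.End k (V ⊗[k] (V ⊗[k] V))) - op12 k V R with hY1def
  set Y2 : Module.End k (V ⊗[k] (V ⊗[k] V)) :=
    q • (1 : Module.End k (V ⊗[k] (V ⊗[k] V))) - op23 k V R with hY2def
  -- the key operator identity
  have hG : Y1 * (Y2 * Y1) - q • Y1 = Y2 * (Y1 * Y2) - q • Y2 := by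
    rw [hY1def, hY2def]
    exact aux_identity q (op12 k V R) (op23 k V R) hAA hBB hb'
  -- pointwise versions of Y1 and Y2
  have hY1app : ∀ (u : (V ⊗[k] V) ⊗[k] V),
      Y1 ((TensorProduct.assoc k V V V) u)
        = (TensorProduct.assoc k V V V)
            (LinearMap.rTensor V (skewY k V q R) u) := by
    intro u
    rw [hY1def]
    induction u using TensorProduct.induction_on with
    | zero => simp
    | tmul w z =>
      simp only [LinearMap.sub_apply, LinearMap.smul_apply, Module.End.one_apply, hAapp,
        LinearMap.rTensor_tmul, hYapp, TensorProduct.sub_tmul, ← TensorProduct.smul_tmul',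
        map_sub, map_smul]
    | add u v hu hv =>
      simp only [map_add, hu, hv, smul_add]
  have hY2app : ∀ (x : V) (s : V ⊗[k] V),
      Y2 (x ⊗ₜ[k] s) = x ⊗ₜ[k] skewY k V q R s := by
    intro x s
    rw [hY2def]
    simp only [LinearMap.sub_apply, LinearMap.smul_apply, Module.End.one_apply, hBapp,
      hYapp, TensorProduct.tmul_sub, TensorProduct.tmul_smul]
  -- a nonzero element of Υ² in the range of Y
  have hfin : Module.Finite k V := Module.finite_of_finrank_pos (by rw [hdim]; norm_num)
  let Bb : Module.Basis (Fin 3) k V := Module.finBasisOfFinrankEq k V hdim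
  have hu₀ : wedge2 k V ζ (Bb 0) (Bb 1) ≠ 0 := by
    intro h0
    have h2 := congrArg
      (TensorProduct.lift (LinearMap.lsmul k V ∘ₗ ((Bb.map ζ).coord 0 : V →ₗ[k] k))) h0
    have hf0 : (Bb.map ζ).coord 0 (ζ (Bb 0)) = 1 := by
      have h3 : ζ (Bb 0) = (Bb.map ζ) 0 := (Module.Basis.map_apply _ _ _).symm
      rw [h3]
      simp [Module.Basis.coord_apply]
    have hf1 : (Bb.map ζ).coord 0 (ζ (Bb 1)) = 0 := by
      have h3 : ζ (Bb 1) = (Bb.map ζ) 1 := (Module.Basis.map_apply _ _ _).symm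
      rw [h3]
      simp [Module.Basis.coord_apply, Module.Basis.repr_self_apply]
    simp only [wedge2, map_zero, map_sub, TensorProduct.lift.tmul,
      LinearMap.comp_apply, LinearMap.lsmul_apply, hf0, hf1, one_smul, zero_smul,
      LinearMap.zero_apply, sub_zero] at h2
    exact Bb.ne_zero 1 h2
  have hu₀mem : wedge2 k V ζ (Bb 0) (Bb 1) ∈ LinearMap.range (skewY k V q R) := by
    rw [hY]
    exact Submodule.subset_span ⟨Bb 0, Bb 1, rfl⟩
  obtain ⟨s₀, hs₀⟩ := hu₀mem
  -- main argument
  intro a ha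
  rcases ha with ha | ha
  · -- left case
    have hRa : ∀ x : V, R (a ⊗ₜ[k] x) = q • (a ⊗ₜ[k] x) := by
      intro x
      have h4 := ha x
      rw [hYapp] at h4
      linear_combination (norm := module) -h4
    have h1 : ∀ s : V ⊗[k] V, Y1 (a ⊗ₜ[k] s) = 0 := by
      intro s
      induction s using TensorProduct.induction_on with
      | zero => simp
      | tmul x y =>
        have h5 : a ⊗ₜ[k] (x ⊗ₜ[k] y)
            = (TensorProduct.assoc k V V V) ((a ⊗ₜ[k] x) ⊗ₜ[k] y) := by
          simp
        rw [h5, hY1def]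
        simp only [LinearMap.sub_apply, LinearMap.smul_apply, Module.End.one_apply, hAapp,
          LinearMap.rTensor_tmul, hRa x, ← TensorProduct.smul_tmul', map_smul, sub_self]
      | add u v hu hv =>
        rw [TensorProduct.tmul_add, map_add, hu, hv, add_zero]
    have key : ∀ s : V ⊗[k] V, a ⊗ₜ[k] skewY k V q R s = 0 := by
      intro s
      have hg := LinearMap.congr_fun hG (a ⊗ₜ[k] s)
      simp only [LinearMap.sub_apply, Module.End.mul_apply, LinearMap.smul_apply] at hg
      rw [h1 s, hY2app a s, h1 (skewY k V q R s)] at hg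
      simp only [map_zero, smul_zero] at hg
      have h6 : q • (a ⊗ₜ[k] skewY k V q R s) = 0 := by
        linear_combination (norm := module) hg
      rcases smul_eq_zero.mp h6 with h | h
      · exact absurd h hq
      · exact h
    have h7 := key s₀
    rw [hs₀] at h7
    exact aux_left_cancel hu₀ h7
  · -- right case
    have hYa0 : ∀ s : V ⊗[k] V,
        Y2 ((TensorProduct.assoc k V V V) (s ⊗ₜ[k] a)) = 0 := by
      intro s
      induction s using TensorProduct.induction_on with
      | zero => simp
      | tmul x y =>
        rw [TensorProduct.assoc_tmul, hY2app, ha y, TensorProduct.tmul_zero]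
      | add u v hu hv =>
        rw [TensorProduct.add_tmul, map_add, map_add, hu, hv, add_zero]
    have key : ∀ s : V ⊗[k] V,
        (TensorProduct.assoc k V V V) (skewY k V q R s ⊗ₜ[k] a) = 0 := by
      intro s
      have hg := LinearMap.congr_fun hG ((TensorProduct.assoc k V V V) (s ⊗ₜ[k] a))
      simp only [LinearMap.sub_apply, Module.End.mul_apply, LinearMap.smul_apply] at hg
      have hy1 : Y1 ((TensorProduct.assoc k V V V) (s ⊗ₜ[k] a))
          = (TensorProduct.assoc k V V V) (skewY k V q R s ⊗ₜ[k] a) := by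
        rw [hY1app, LinearMap.rTensor_tmul]
      rw [hYa0 s, hy1, hYa0 (skewY k V q R s)] at hg
      simp only [map_zero, smul_zero] at hg
      have h6 : q • (TensorProduct.assoc k V V V) (skewY k V q R s ⊗ₜ[k] a) = 0 := by
        linear_combination (norm := module) -hg
      rcases smul_eq_zero.mp h6 with h | h
      · exact absurd h hq
      · exact h
    have h0 := key s₀
    rw [hs₀] at h0
    have h8 : wedge2 k V ζ (Bb 0) (Bb 1) ⊗ₜ[k] a = 0 := by
      have h9 := congrArg (TensorProduct.assoc k V V V).symm h0
      simpa using h9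
    exact aux_right_cancel hu₀ h8
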